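/- arXiv:2302.13299 — 3 statements merged into one kernel-verified Lean document; each statement's English description precedes it below -/
import Mathlib

section
/- Let x ∈ ℂ^D be a unit vector with real and imaginary parts x^re, x^im ∈ ℝ^D. Define x₊^re, x₋^re, x₊^im, x₋^im ∈ ℝ^D by splitting x^re and x^im into their (entrywise) nonnegative and negative parts, so x^re = x₊^re + x₋^re and x^im = x₊^im + x₋^im. Let Φ = e_{00} ⊗ x₊^re − e_{01} ⊗ x₋^re + e_{10} ⊗ x₊^im − e_{11} ⊗ x₋^im ∈ ℂ² ⊗ ℂ² ⊗ ℂ^D. Then: (i) ‖Φ‖ = 1; (ii) the component of (H ⊗ I_2 ⊗ I_D)(S ⊗ H ⊗ I_D)Φ on the two-qubit ancilla basis state e_{01} equals x/2; hence the probability of ancilla outcome 01 is 1/4 and the normalized post-measurement vector is x. -/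
open Matrix Kronecker

/-- The 2×2 Hadamard matrix. -/
noncomputable def Hmat : Matrix (Fin 2) (Fin 2) ℂ :=
  ((Real.sqrt 2 : ℂ))⁻¹ • !![1, 1; 1, -1]

/-- The 2×2 phase gate `S = diag(1, i)`. -/
def Smat : Matrix (Fin 2) (Fin 2) ℂ := !![1, 0; 0, Complex.I]

/-!
`S ⊗ H` followed by `H ⊗ I` puts the amplitude `((Φ₀₀ - Φ₀₁) + i (Φ₁₀ - Φ₁₁)) / 2` on the
ancilla state `e₀₁`, and the signs in `Φ` make `Φ₀₀ - Φ₀₁ = xʳᵉ` and `Φ₁₀ - Φ₁₁ = xⁱᵐ`, so this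
amplitude is `x / 2`. The positive and negative parts of a real number have disjoint supports,
so their squares add up to its square, which gives `‖Φ‖ = ‖x‖ = 1`.
-/

section SignSplit

variable {α : Type*} [LinearOrder α]

theorem ite_nonneg_add_ite_neg [AddZeroClass α] (a : α) :
    (if 0 ≤ a then a else 0) + (if a < 0 then a else 0) = a := by
  rcases le_or_gt 0 a with h | h <;> simp [h, not_lt.mpr, not_le.mpr]

theorem ite_nonneg_sq_add_ite_neg_sq [Semiring α] (a : α) :
    (if 0 ≤ a then a else 0) ^ 2 + (if a < 0 then a else 0) ^ 2 = a ^ 2 := by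
  rcases le_or_gt 0 a with h | h <;> simp [h, not_lt.mpr, not_le.mpr]

end SignSplit

theorem mulVec_kronecker_one_apply {R l m n : Type*} [CommSemiring R] [Fintype m] [Fintype n]
    [DecidableEq n] (A : Matrix l m R) (v : m × n → R) (i : l) (j : n) :
    ((A ⊗ₖ (1 : Matrix n n R)) *ᵥ v) (i, j) = (A *ᵥ fun k => v (k, j)) i := by
  simp [mulVec, dotProduct, Fintype.sum_prod_type, one_apply]

theorem sqrt_two_inv_mul_self : ((Real.sqrt 2 : ℂ))⁻¹ * ((Real.sqrt 2 : ℂ))⁻¹ = 1 / 2 := by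
  rw [← mul_inv, ← Complex.ofReal_mul, Real.mul_self_sqrt zero_le_two]; norm_num

theorem hadamard_phase_circuit_apply_zero_one {ι : Type*} [Fintype ι] [DecidableEq ι]
    (Φ : (Fin 2 × Fin 2) × ι → ℂ) (j : ι) :
    (((Hmat ⊗ₖ (1 : Matrix (Fin 2) (Fin 2) ℂ)) ⊗ₖ (1 : Matrix ι ι ℂ)) *ᵥ
        (((Smat ⊗ₖ Hmat) ⊗ₖ (1 : Matrix ι ι ℂ)) *ᵥ Φ)) ((0, 1), j) =
      (Φ ((0, 0), j) - Φ ((0, 1), j) + Complex.I * (Φ ((1, 0), j) - Φ ((1, 1), j))) / 2 := by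
  simp only [mulVec_kronecker_one_apply]
  simp only [mulVec, dotProduct, Hmat, Smat, Fintype.sum_prod_type, Fin.sum_univ_two, Fin.isValue,
    Matrix.smul_apply, smul_of, smul_cons, smul_empty, smul_eq_mul, of_apply, kroneckerMap_apply,
    cons_val', cons_val_fin_one, cons_val_zero, cons_val_one, mul_one, one_mul, zero_mul, mul_neg,
    neg_mul, neg_zero, add_zero, zero_add]
  linear_combination
    (Φ ((0, 0), j) - Φ ((0, 1), j) + Complex.I * (Φ ((1, 0), j) - Φ ((1, 1), j))) *
      sqrt_two_inv_mul_self

theorem vqsp_complex_case (D : ℕ) (x : Fin D → ℂ) (hx : ∑ j, ‖x j‖ ^ 2 = 1) :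
    let xpre : Fin D → ℝ := fun j => if 0 ≤ (x j).re then (x j).re else 0
    let xmre : Fin D → ℝ := fun j => if (x j).re < 0 then (x j).re else 0
    let xpim : Fin D → ℝ := fun j => if 0 ≤ (x j).im then (x j).im else 0
    let xmim : Fin D → ℝ := fun j => if (x j).im < 0 then (x j).im else 0
    let Φ : (Fin 2 × Fin 2) × Fin D → ℂ := fun p =>
      if p.1 = (0, 0) then (xpre p.2 : ℂ)
      else if p.1 = (0, 1) then -(xmre p.2 : ℂ)
      else if p.1 = (1, 0) then (xpim p.2 : ℂ)
      else -(xmim p.2 : ℂ)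
    let W : (Fin 2 × Fin 2) × Fin D → ℂ :=
      ((Hmat ⊗ₖ (1 : Matrix (Fin 2) (Fin 2) ℂ)) ⊗ₖ (1 : Matrix (Fin D) (Fin D) ℂ)).mulVec
        (((Smat ⊗ₖ Hmat) ⊗ₖ (1 : Matrix (Fin D) (Fin D) ℂ)).mulVec Φ)
    -- (i) Φ is a unit vector
    (∑ p, ‖Φ p‖ ^ 2 = 1) ∧
    -- (ii) the component on the ancilla basis state e₀₁ is x/2
    (∀ jd, W ((0, 1), jd) = x jd / 2) ∧
    -- the probability of outcome 01 is 1/4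
    (∑ jd, ‖W ((0, 1), jd)‖ ^ 2 = 1 / 4) ∧
    -- the normalized post-measurement vector is x
    (∀ jd, 2 * W ((0, 1), jd) = x jd) := by
  intro xpre xmre xpim xmim Φ W
  have hW : ∀ j, W ((0, 1), j) = x j / 2 := fun j => by
    have hre : Φ ((0, 0), j) - Φ ((0, 1), j) = (x j).re := by
      show (xpre j : ℂ) - -(xmre j : ℂ) = _
      rw [sub_neg_eq_add, ← Complex.ofReal_add, ite_nonneg_add_ite_neg]
    have him : Φ ((1, 0), j) - Φ ((1, 1), j) = (x j).im := by
      show (xpim j : ℂ) - -(xmim j : ℂ) = _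
      rw [sub_neg_eq_add, ← Complex.ofReal_add, ite_nonneg_add_ite_neg]
    simp only [W, hadamard_phase_circuit_apply_zero_one, hre, him, mul_comm Complex.I,
      Complex.re_add_im]
  refine ⟨?_, hW, ?_, fun j => by rw [hW]; ring⟩
  · rw [Fintype.sum_prod_type_right, ← hx]
    refine Finset.sum_congr rfl fun j _ => ?_
    simp only [Φ, Fintype.sum_prod_type, Fin.sum_univ_two, Prod.ext_iff, Fin.isValue, zero_ne_one,
      one_ne_zero, and_true, and_false, ↓reduceIte, norm_neg, Complex.norm_real, Real.norm_eq_abs,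
      sq_abs]
    simp only [xpre, xmre, xpim, xmim, ite_nonneg_sq_add_ite_neg_sq]
    rw [Complex.sq_norm, Complex.normSq_apply]
    ring
  · simp_rw [hW, norm_div, div_pow, ← Finset.sum_div, hx]
    norm_num
end

section
/- Let m ≥ 1, M = 2^m, and let Q_0, …, Q_{M-1} be N×N complex matrices, a_0, …, a_{M-1} nonnegative reals not all zero, A' = ∑_j a_j², Q = ∑_j a_j Q_j, and a' = ∑_j (a_j/√A')·e_j ∈ ℂ^M. Let Λ = ∑_j |j⟩⟨j| ⊗ Q_j and let H^{⊗m} be the m-fold Kronecker power of the Hadamard matrix, with entries (H^{⊗m})_{j',j} = (−1)^{j·j'}/√(2^m), where j·j' is the bitwise inner product modulo 2 of the binary expansions of j and j'. Then for every ψ ∈ ℂ^N: (i) (H^{⊗m} ⊗ I_N)·Λ·(a' ⊗ ψ) = (1/√(2^m A')) ∑_{j,j'=0}^{M-1} a_j(−1)^{j·j'} e_{j'} ⊗ Q_jψ; (ii) the component of this vector on the ancilla basis state e_0 equals Qψ/√(2^m A'); hence if ‖ψ‖ = 1, the probability of measuring the ancilla register in state e_0 is ‖Qψ‖²/(2^m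 A'). -/
/-!
`Λ` is block diagonal with blocks `Q j`, so on the product state `a' ⊗ ψ` it produces
`∑ⱼ a'ⱼ eⱼ ⊗ Qⱼψ`; applying `H^{⊗m} ⊗ I` then gives (i) entrywise. Row `0` of `H^{⊗m}` is
constant (`j · 0 = 0`), so the `e₀` component is `∑ⱼ aⱼ Qⱼψ / √(2^m A') = Qψ / √(2^m A')`,
and the probability is its squared norm.
-/

open Matrix Kronecker

/-- Bitwise inner product of the binary expansions of `j` and `j'`. -/
def bitDot {M : ℕ} (m : ℕ) (j j' : Fin M) : ℕ :=
  ∑ g : Fin m, (Nat.testBit j.val g.val).toNat * (Nat.testBit j'.val g.val).toNat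

namespace Matrix

theorem sum_single_kronecker_apply {ι κ R : Type*} [Fintype ι] [DecidableEq ι] [Semiring R]
    (Q : ι → Matrix κ κ R) (p q : ι × κ) :
    (∑ j, single j j (1 : R) ⊗ₖ Q j) p q = if p.1 = q.1 then Q p.1 p.2 q.2 else 0 := by
  simp [sum_apply, single_apply, ite_and]

theorem sum_single_kronecker_mulVec {ι κ R : Type*} [Fintype ι] [DecidableEq ι] [Fintype κ]
    [CommSemiring R] (Q : ι → Matrix κ κ R) (x : ι → R) (ψ : κ → R) :
    (∑ j, single j j (1 : R) ⊗ₖ Q j) *ᵥ (fun p => x p.1 * ψ p.2)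
      = fun p => x p.1 * (Q p.1 *ᵥ ψ) p.2 := by
  funext p
  simp [mulVec, dotProduct, sum_single_kronecker_apply, Fintype.sum_prod_type, Finset.mul_sum,
    mul_left_comm]

theorem kronecker_one_mulVec {ι ι' κ R : Type*} [Fintype ι] [Fintype κ] [DecidableEq κ]
    [Semiring R] (A : Matrix ι' ι R) (w : ι × κ → R) :
    (A ⊗ₖ (1 : Matrix κ κ R)) *ᵥ w = fun p => ∑ j, A p.1 j * w (j, p.2) := by
  funext p
  simp [mulVec, dotProduct, Fintype.sum_prod_type, one_apply]

end Matrix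

theorem bitDot_mk_zero_right {M : ℕ} (m : ℕ) (j : Fin M) (h : 0 < M) :
    bitDot m j ⟨0, h⟩ = 0 := by
  simp [bitDot]

theorem lcu_hadamard_ancilla_general (m N : ℕ)
    (Q : Fin (2 ^ m) → Matrix (Fin N) (Fin N) ℂ)
    (a : Fin (2 ^ m) → ℝ) :
    let A' : ℝ := ∑ j, a j ^ 2
    let a' : Fin (2 ^ m) → ℂ := fun j => (a j : ℂ) / (Real.sqrt A' : ℂ)
    let Λ : Matrix (Fin (2 ^ m) × Fin N) (Fin (2 ^ m) × Fin N) ℂ :=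
      ∑ j, Matrix.single j j (1 : ℂ) ⊗ₖ Q j
    let Hpow : Matrix (Fin (2 ^ m)) (Fin (2 ^ m)) ℂ :=
      fun j' j => (-1 : ℂ) ^ bitDot m j j' / (Real.sqrt (2 ^ m) : ℂ)
    let Qmat : Matrix (Fin N) (Fin N) ℂ := ∑ j, (a j : ℂ) • Q j
    ∀ ψ : Fin N → ℂ,
      let v : Fin (2 ^ m) × Fin N → ℂ :=
        (Hpow ⊗ₖ (1 : Matrix (Fin N) (Fin N) ℂ)).mulVec
          (Λ.mulVec (fun p => a' p.1 * ψ p.2))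
      -- (i)
      (v = fun p => (1 / (Real.sqrt (2 ^ m * A') : ℂ)) *
          ∑ j, (a j : ℂ) * (-1 : ℂ) ^ bitDot m j p.1 * (Q j).mulVec ψ p.2) ∧
      -- (ii) component on the ancilla basis state e₀
      (∀ i, v (⟨0, Nat.two_pow_pos m⟩, i)
          = Qmat.mulVec ψ i / (Real.sqrt (2 ^ m * A') : ℂ)) ∧
      -- probability of measuring the ancilla in state e₀
      ((∑ i, ‖ψ i‖ ^ 2 = 1) →
        ∑ i, ‖v (⟨0, Nat.two_pow_pos m⟩, i)‖ ^ 2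
          = (∑ i, ‖Qmat.mulVec ψ i‖ ^ 2) / (2 ^ m * A')) := by
  intro A' a' Λ Hpow Qmat ψ v
  have hv : v = fun p => (1 / (Real.sqrt (2 ^ m * A') : ℂ)) *
      ∑ j, (a j : ℂ) * (-1 : ℂ) ^ bitDot m j p.1 * (Q j).mulVec ψ p.2 := by
    funext p
    simp only [v, Λ]
    rw [sum_single_kronecker_mulVec, kronecker_one_mulVec]
    simp only [Hpow, a', Real.sqrt_mul (by positivity : (0 : ℝ) ≤ 2 ^ m), Complex.ofReal_mul,
      Finset.mul_sum]
    refine Finset.sum_congr rfl fun j _ => ?_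
    ring
  have hv₀ : ∀ i, v (⟨0, Nat.two_pow_pos m⟩, i)
      = Qmat.mulVec ψ i / (Real.sqrt (2 ^ m * A') : ℂ) := by
    intro i
    simp only [hv, bitDot_mk_zero_right, pow_zero, mul_one, Qmat, sum_mulVec, smul_mulVec,
      Finset.sum_apply, Pi.smul_apply, smul_eq_mul]
    ring
  refine ⟨hv, hv₀, fun _ => ?_⟩
  have hsq : ‖(Real.sqrt (2 ^ m * A') : ℂ)‖ ^ 2 = 2 ^ m * A' := by
    rw [Complex.norm_real, Real.norm_eq_abs, sq_abs, Real.sq_sqrt (by positivity)]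
  simp only [hv₀, norm_div, div_pow, hsq, Finset.sum_div]

theorem lcu_hadamard_ancilla (m N : ℕ) (hm : 1 ≤ m)
    (Q : Fin (2 ^ m) → Matrix (Fin N) (Fin N) ℂ)
    (a : Fin (2 ^ m) → ℝ) (ha : ∀ j, 0 ≤ a j) (hne : ∃ j, a j ≠ 0) :
    let A' : ℝ := ∑ j, a j ^ 2
    let a' : Fin (2 ^ m) → ℂ := fun j => (a j : ℂ) / (Real.sqrt A' : ℂ)
    let Λ : Matrix (Fin (2 ^ m) × Fin N) (Fin (2 ^ m) × Fin N) ℂ :=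
      ∑ j, Matrix.single j j (1 : ℂ) ⊗ₖ Q j
    let Hpow : Matrix (Fin (2 ^ m)) (Fin (2 ^ m)) ℂ :=
      fun j' j => (-1 : ℂ) ^ bitDot m j j' / (Real.sqrt (2 ^ m) : ℂ)
    let Qmat : Matrix (Fin N) (Fin N) ℂ := ∑ j, (a j : ℂ) • Q j
    ∀ ψ : Fin N → ℂ,
      let v : Fin (2 ^ m) × Fin N → ℂ :=
        (Hpow ⊗ₖ (1 : Matrix (Fin N) (Fin N) ℂ)).mulVec
          (Λ.mulVec (fun p => a' p.1 * ψ p.2))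
      -- (i)
      (v = fun p => (1 / (Real.sqrt (2 ^ m * A') : ℂ)) *
          ∑ j, (a j : ℂ) * (-1 : ℂ) ^ bitDot m j p.1 * (Q j).mulVec ψ p.2) ∧
      -- (ii) component on the ancilla basis state e₀
      (∀ i, v (⟨0, Nat.two_pow_pos m⟩, i)
          = Qmat.mulVec ψ i / (Real.sqrt (2 ^ m * A') : ℂ)) ∧
      -- probability of measuring the ancilla in state e₀
      ((∑ i, ‖ψ i‖ ^ 2 = 1) →
        ∑ i, ‖v (⟨0, Nat.two_pow_pos m⟩, i)‖ ^ 2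
          = (∑ i, ‖Qmat.mulVec ψ i‖ ^ 2) / (2 ^ m * A')) :=
  lcu_hadamard_ancilla_general m N Q a
end

section
/- Let D ≥ 1 and let x ∈ ℝ^D satisfy x_j > 0 for all j and ∑_j x_j² = 1. Let φ ∈ ℂ^D be any unit vector (∑_j |φ_j|² = 1) with φ_j ≠ 0 for all j. Define the cost F(φ) = |∑_j φ_j − ∑_j x_j| + ∑_j x_j² · log(x_j² / |φ_j|²), where |·| in the first term is the complex modulus. Then F(φ) ≥ 0, and F(φ) = 0 if and only if φ_j = x_j for all j. -/
/-!
Writing `p log (p / q) = q · klFun (p / q) + (p - q)` with `klFun t = t log t + 1 - t ≥ 0`,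
vanishing only at `t = 1`, the relative-entropy term is a sum of nonnegative terms once
`∑ p = ∑ q`, and it vanishes exactly when `|φ_j| = x_j` for all `j`. Then the first term
vanishes iff `∑ φ_j = ∑ |φ_j|`, and since `Re z ≤ |z|` with equality only for `z ≥ 0`,
this forces every `φ_j` to be the nonnegative real `|φ_j| = x_j`.
-/

open Finset Real InformationTheory ComplexOrder

lemma mul_log_div_eq_mul_klFun_add {p q : ℝ} (hq : q ≠ 0) :
    p * log (p / q) = q * klFun (p / q) + (p - q) := by
  rw [klFun_apply]
  field_simp
  ring

section RelativeEntropy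

variable {ι : Type*} {s : Finset ι} {p q : ι → ℝ}

lemma sum_mul_log_div_eq_sum_mul_klFun (hq : ∀ i ∈ s, q i ≠ 0)
    (hpq : ∑ i ∈ s, p i = ∑ i ∈ s, q i) :
    ∑ i ∈ s, p i * log (p i / q i) = ∑ i ∈ s, q i * klFun (p i / q i) := by
  rw [sum_congr rfl fun i hi ↦ mul_log_div_eq_mul_klFun_add (p := p i) (hq i hi),
    sum_add_distrib, sum_sub_distrib, hpq, sub_self, add_zero]

lemma mul_klFun_div_nonneg {a b : ℝ} (ha : 0 ≤ a) (hb : 0 < b) : 0 ≤ b * klFun (a / b) :=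
  mul_nonneg hb.le (klFun_nonneg (div_nonneg ha hb.le))

lemma sum_mul_log_div_nonneg (hp : ∀ i ∈ s, 0 ≤ p i) (hq : ∀ i ∈ s, 0 < q i)
    (hpq : ∑ i ∈ s, p i = ∑ i ∈ s, q i) :
    0 ≤ ∑ i ∈ s, p i * log (p i / q i) := by
  rw [sum_mul_log_div_eq_sum_mul_klFun (fun i hi ↦ (hq i hi).ne') hpq]
  exact sum_nonneg fun i hi ↦ mul_klFun_div_nonneg (hp i hi) (hq i hi)

lemma sum_mul_log_div_eq_zero_iff (hp : ∀ i ∈ s, 0 ≤ p i) (hq : ∀ i ∈ s, 0 < q i)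
    (hpq : ∑ i ∈ s, p i = ∑ i ∈ s, q i) :
    ∑ i ∈ s, p i * log (p i / q i) = 0 ↔ ∀ i ∈ s, p i = q i := by
  rw [sum_mul_log_div_eq_sum_mul_klFun (fun i hi ↦ (hq i hi).ne') hpq,
    sum_eq_zero_iff_of_nonneg fun i hi ↦ mul_klFun_div_nonneg (hp i hi) (hq i hi)]
  refine forall₂_congr fun i hi ↦ ?_
  rw [mul_eq_zero_iff_left (hq i hi).ne', klFun_eq_zero_iff (div_nonneg (hp i hi) (hq i hi).le),
    div_eq_one_iff_eq (hq i hi).ne']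

end RelativeEntropy

lemma Complex.sum_eq_sum_norm_iff {ι : Type*} {s : Finset ι} {z : ι → ℂ} :
    ∑ i ∈ s, z i = ∑ i ∈ s, (‖z i‖ : ℂ) ↔ ∀ i ∈ s, z i = ‖z i‖ := by
  refine ⟨fun h ↦ ?_, fun h ↦ sum_congr rfl h⟩
  have hre : ∑ i ∈ s, (z i).re = ∑ i ∈ s, ‖z i‖ := by
    simpa only [re_sum, ofReal_re] using congrArg re h
  intro i hi
  have hi_re : (z i).re = ‖z i‖ :=
    (sum_eq_sum_iff_of_le fun j _ ↦ re_le_norm (z j)).mp hre i hi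
  exact eq_coe_norm_of_nonneg (re_eq_norm.mp hi_re)

theorem cost_function_nonneg_and_faithful_general (D : ℕ)
    (x : Fin D → ℝ) (hxpos : ∀ j, 0 < x j) (hx : ∑ j, x j ^ 2 = 1)
    (φ : Fin D → ℂ) (hφ : ∑ j, ‖φ j‖ ^ 2 = 1) (hφne : ∀ j, φ j ≠ 0) :
    let F : ℝ := ‖(∑ j, φ j) - ∑ j, (x j : ℂ)‖ +
      ∑ j, x j ^ 2 * Real.log (x j ^ 2 / ‖φ j‖ ^ 2)
    0 ≤ F ∧ (F = 0 ↔ ∀ j, φ j = (x j : ℂ)) := by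
  intro F
  have hx_sq : ∀ j ∈ univ, 0 ≤ x j ^ 2 := fun j _ ↦ sq_nonneg _
  have hφ_sq : ∀ j ∈ univ, 0 < ‖φ j‖ ^ 2 := fun j _ ↦ by simp [hφne j]
  have hmass : ∑ j, x j ^ 2 = ∑ j, ‖φ j‖ ^ 2 := hx.trans hφ.symm
  have hKL := sum_mul_log_div_nonneg hx_sq hφ_sq hmass
  refine ⟨add_nonneg (norm_nonneg _) hKL, ?_⟩
  rw [add_eq_zero_iff_of_nonneg (norm_nonneg _) hKL, norm_eq_zero, sub_eq_zero,
    sum_mul_log_div_eq_zero_iff hx_sq hφ_sq hmass]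
  constructor
  · rintro ⟨hsum, hsq⟩ j
    have hnorm : ∀ j, ‖φ j‖ = x j := fun j ↦
      (pow_left_inj₀ (norm_nonneg _) (hxpos j).le two_ne_zero).mp (hsq j (mem_univ j)).symm
    simp only [← hnorm] at hsum ⊢
    exact Complex.sum_eq_sum_norm_iff.mp hsum j (mem_univ j)
  · intro h
    simp [h]

theorem cost_function_nonneg_and_faithful (D : ℕ) (hD : 1 ≤ D)
    (x : Fin D → ℝ) (hxpos : ∀ j, 0 < x j) (hx : ∑ j, x j ^ 2 = 1)
    (φ : Fin D → ℂ) (hφ : ∑ j, ‖φ j‖ ^ 2 = 1) (hφne : ∀ j, φ j ≠ 0) :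
    let F : ℝ := ‖(∑ j, φ j) - ∑ j, (x j : ℂ)‖ +
      ∑ j, x j ^ 2 * Real.log (x j ^ 2 / ‖φ j‖ ^ 2)
    0 ≤ F ∧ (F = 0 ↔ ∀ j, φ j = (x j : ℂ)) :=
  cost_function_nonneg_and_faithful_general D x hxpos hx φ hφ hφne
end
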